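/- Let G be a strictly chordal graph and S a minimal vertex separator of G. Then any two vertices of S are true twins in G. -/

import Mathlib

open SimpleGraph Matrix

/-- `S` separates `u` and `v` in `G`: every walk from `u` to `v` meets `S`. -/
def Separates {V : Type*} (G : SimpleGraph V) (u v : V) (S : Set V) : Prop :=
  ∀ p : G.Walk u v, ∃ x ∈ p.support, x ∈ S

/-- `S` is a minimal `uv`-separator. -/
def IsMinimalUVSeparator {V : Type*} (G : SimpleGraph V) (u v : V) (S : Set V) : Prop :=
  u ≠ v ∧ ¬ G.Adj u v ∧ u ∉ S ∧ v ∉ S ∧ Separates G u v S ∧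
    ∀ S' ⊂ S, ¬ Separates G u v S'

/-- `S` is a minimal vertex separator: a minimal `uv`-separator for some non-adjacent pair. -/
def IsMinimalVertexSeparator {V : Type*} (G : SimpleGraph V) (S : Set V) : Prop :=
  ∃ u v, IsMinimalUVSeparator G u v S

/-- `G` is chordal: it has no induced cycle of length at least 4. -/
def Chordal {V : Type*} (G : SimpleGraph V) : Prop :=
  ∀ n, 4 ≤ n → ¬ ∃ f : Fin n ↪ V, ∀ a b, (SimpleGraph.cycleGraph n).Adj a b ↔ G.Adj (f a) (f b)

/-- `G` is strictly chordal: chordal with pairwise disjoint minimal vertex separators. -/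
def StrictlyChordal {V : Type*} (G : SimpleGraph V) : Prop :=
  Chordal G ∧ ∀ S S' : Set V, IsMinimalVertexSeparator G S →
    IsMinimalVertexSeparator G S' → S ≠ S' → Disjoint S S'

/-!
A minimal `uv`-separator `S` of a chordal graph is a clique (Dirac): two non-adjacent
`x, y ∈ S` would be joined by induced paths through the component of `u` and through the
component of `v` in `G - S`, and these close up to a chordless cycle of length at least `4`.
Now let `a, b ∈ S`, so `a ~ b`, and suppose some `z ∈ N(a)` lies outside `N[b]`. The
neighbours of `b` that see the component of `z` in `G - N[b]` form a minimal `zb`-separator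
containing `a` but not `b`. It meets `S` without being equal to it, contradicting strict
chordality. Hence `N[a] ⊆ N[b]`, and by symmetry `N[a] = N[b]`.
-/

namespace SimpleGraph

variable {V : Type*} {G : SimpleGraph V}

def ReachableAvoiding (G : SimpleGraph V) (A : Set V) (a b : V) : Prop :=
  ∃ p : G.Walk a b, ∀ w ∈ p.support, w ∉ A

namespace ReachableAvoiding

variable {A : Set V} {a b c : V}

lemma refl (ha : a ∉ A) : ReachableAvoiding G A a a :=
  ⟨.nil, by simpa using ha⟩

lemma symm (h : ReachableAvoiding G A a b) : ReachableAvoiding G A b a :=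
  let ⟨p, hp⟩ := h
  ⟨p.reverse, by simpa using hp⟩

lemma trans (h₁ : ReachableAvoiding G A a b) (h₂ : ReachableAvoiding G A b c) :
    ReachableAvoiding G A a c :=
  let ⟨p, hp⟩ := h₁
  let ⟨q, hq⟩ := h₂
  ⟨p.append q, fun w hw => (Walk.mem_support_append_iff p q).mp hw |>.elim (hp w) (hq w)⟩

lemma right_notMem (h : ReachableAvoiding G A a b) : b ∉ A :=
  let ⟨p, hp⟩ := h
  hp b p.end_mem_support

lemma trans_adj (h : ReachableAvoiding G A a b) (hbc : G.Adj b c) (hc : c ∉ A) :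
    ReachableAvoiding G A a c :=
  h.trans ⟨hbc.toWalk, by simp [h.right_notMem, hc]⟩

lemma mono (h : ReachableAvoiding G A a b) {B : Set V} (hBA : B ⊆ A) :
    ReachableAvoiding G B a b :=
  let ⟨p, hp⟩ := h
  ⟨p, fun w hw hwB => hp w hw (hBA hwB)⟩

lemma of_mem_support {p : G.Walk a b} (hp : ∀ w ∈ p.support, w ∉ A) {w : V}
    (hw : w ∈ p.support) : ReachableAvoiding G A a w := by
  classical
  exact ⟨p.takeUntil w hw, fun z hz => hp z (p.support_takeUntil_subset_support hw hz)⟩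

end ReachableAvoiding

lemma separates_iff_not_reachableAvoiding {u v : V} {S : Set V} :
    Separates G u v S ↔ ¬ ReachableAvoiding G S u v := by
  simp [Separates, ReachableAvoiding]

lemma Walk.exists_reachableAvoiding_adj_mem {A : Set V} {a b : V} (p : G.Walk a b)
    (ha : a ∉ A) (hp : ∃ w ∈ p.support, w ∈ A) :
    ∃ c d, ReachableAvoiding G A a c ∧ G.Adj c d ∧ d ∈ A ∧ d ∈ p.support := by
  induction p with
  | nil =>
    obtain ⟨w, hw, hwA⟩ := hp
    rw [Walk.support_nil, List.mem_singleton] at hw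
    exact absurd (hw ▸ hwA) ha
  | @cons a c b hac q ih =>
    by_cases hc : c ∈ A
    · exact ⟨a, c, .refl ha, hac, hc, by simp⟩
    obtain ⟨w, hw, hwA⟩ := hp
    have hw' : w ∈ q.support := by
      rcases List.mem_cons.mp hw with rfl | hw
      · exact absurd hwA ha
      · exact hw
    obtain ⟨c', d, hcc', hc'd, hd, hdq⟩ := ih hc ⟨w, hw', hwA⟩
    exact ⟨c', d, ((ReachableAvoiding.refl ha).trans_adj hac hc).trans hcc', hc'd, hd,
      List.mem_cons_of_mem _ hdq⟩

def Walk.IsInducedPath {x y : V} (p : G.Walk x y) : Prop :=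
  p.IsPath ∧ ∀ i j, i + 1 < j → j ≤ p.length → ¬ G.Adj (p.getVert i) (p.getVert j)

lemma Walk.exists_shorter_of_adj_getVert {x y : V} (p : G.Walk x y) {i j : ℕ}
    (hij : i + 1 < j) (hj : j ≤ p.length) (hadj : G.Adj (p.getVert i) (p.getVert j)) :
    ∃ q : G.Walk x y, q.length < p.length ∧ q.support ⊆ p.support := by
  refine ⟨(p.take i).append (.cons hadj (p.drop j)), ?_, fun w hw => ?_⟩
  · simp only [Walk.length_append, Walk.take_length, Walk.length_cons, Walk.drop_length]
    omega
  rw [Walk.mem_support_append_iff, Walk.support_cons, List.mem_cons] at hw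
  rcases hw with hw | rfl | hw
  · obtain ⟨n, rfl, -⟩ := Walk.mem_support_iff_exists_getVert.mp hw
    rw [Walk.take_getVert]
    exact p.getVert_mem_support _
  · exact p.getVert_mem_support _
  · obtain ⟨n, rfl, -⟩ := Walk.mem_support_iff_exists_getVert.mp hw
    rw [Walk.drop_getVert]
    exact p.getVert_mem_support _

/-- A shortest walk inside the support of `p` is an induced path. -/
lemma Walk.exists_isInducedPath_support_subset {x y : V} (p : G.Walk x y) :
    ∃ q : G.Walk x y, q.IsInducedPath ∧ q.support ⊆ p.support := by
  classical
  have hex : ∃ n, ∃ q : G.Walk x y, q.support ⊆ p.support ∧ q.length = n :=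
    ⟨_, p, List.Subset.refl _, rfl⟩
  obtain ⟨q₀, hq₀, hlen⟩ := Nat.find_spec hex
  have hmin : ∀ q : G.Walk x y, q.support ⊆ p.support → q₀.length ≤ q.length :=
    fun q hq => hlen ▸ Nat.find_min' hex ⟨q, hq, rfl⟩
  have hsub : q₀.bypass.support ⊆ p.support :=
    List.Subset.trans q₀.support_bypass_subset_support hq₀
  refine ⟨q₀.bypass, ⟨q₀.bypass_isPath, fun i j hij hj hadj => ?_⟩, hsub⟩
  obtain ⟨q, hlt, hq⟩ := q₀.bypass.exists_shorter_of_adj_getVert hij hj hadj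
  have := hmin q (List.Subset.trans hq hsub)
  have := q₀.length_bypass_le_length
  omega

lemma cycleGraph_adj_of_lt {n : ℕ} {a b : Fin n} (hab : a < b) :
    (cycleGraph n).Adj a b ↔ b.val = a.val + 1 ∨ (a.val = 0 ∧ b.val + 1 = n) := by
  have hba : ((b - a : Fin n) : ℕ) = b - a := Fin.coe_sub_iff_le.mpr hab.le
  have hab' : ((a - b : Fin n) : ℕ) = n + a - b := Fin.coe_sub_iff_lt.mpr hab
  rw [cycleGraph_adj', hba, hab']
  have := b.isLt
  rw [Fin.lt_def] at hab
  omega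

end SimpleGraph

section

variable {V : Type*} {G : SimpleGraph V}

/-- The condition `0 < i ∨ j + 1 < c.length` excludes the closing edge `(0, c.length - 1)`. -/
lemma Chordal.exists_chord (hG : Chordal G) {x : V} (c : G.Walk x x) (hlen : 4 ≤ c.length)
    (hinj : Set.InjOn c.getVert {i | i < c.length}) :
    ∃ i j, i + 1 < j ∧ j < c.length ∧ (0 < i ∨ j + 1 < c.length) ∧
      G.Adj (c.getVert i) (c.getVert j) := by
  by_contra! hchord
  have hadj_of_lt : ∀ a b : Fin c.length, a < b →
      ((cycleGraph c.length).Adj a b ↔ G.Adj (c.getVert a) (c.getVert b)) := by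
    intro a b hab
    rw [cycleGraph_adj_of_lt hab]
    refine ⟨?_, fun h => ?_⟩
    · rintro (hb | ⟨ha, hb⟩)
      · exact hb ▸ c.adj_getVert_succ (by omega)
      · have := c.adj_getVert_succ (i := b) (by omega)
        rw [hb, c.getVert_length] at this
        rw [ha, c.getVert_zero]
        exact this.symm
    · by_contra! hne
      exact hchord a b (by omega) b.isLt (by omega) h
  refine hG c.length hlen
    ⟨⟨fun i => c.getVert i, fun a b h => Fin.ext (hinj a.isLt b.isLt h)⟩, fun a b => ?_⟩
  rcases lt_trichotomy a b with hab | rfl | hab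
  · exact hadj_of_lt a b hab
  · simp
  · rw [SimpleGraph.adj_comm, G.adj_comm]
    exact hadj_of_lt b a hab

lemma SimpleGraph.Walk.two_le_length {x y : V} (p : G.Walk x y) (hxy : x ≠ y)
    (hnadj : ¬ G.Adj x y) : 2 ≤ p.length := by
  have h0 : p.length ≠ 0 := fun h => hxy (p.eq_of_length_eq_zero h)
  have h1 : p.length ≠ 1 := fun h => hnadj <| by
    have := p.adj_getVert_succ (i := 0) (by omega)
    rwa [p.getVert_zero, zero_add, ← h, p.getVert_length] at this
  omega

/-- Two induced `x`–`y` paths whose interiors are disjoint and mutually non-adjacent close up to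
an induced cycle, of length at least `4` unless `x` and `y` are adjacent. -/
lemma Chordal.adj_of_isInducedPath (hG : Chordal G) {x y : V} {p q : G.Walk x y}
    (hp : p.IsInducedPath) (hq : q.IsInducedPath) (hxy : x ≠ y)
    (hcross : ∀ i j, 0 < i → i < p.length → 0 < j → j < q.length →
      p.getVert i ≠ q.getVert j ∧ ¬ G.Adj (p.getVert i) (q.getVert j)) :
    G.Adj x y := by
  by_contra hnadj
  have hp2 := p.two_le_length hxy hnadj
  have hq2 := q.two_le_length hxy hnadj
  set c := p.append q.reverse
  have hn : c.length = p.length + q.length := by simp [c]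
  have hc_left : ∀ k ≤ p.length, c.getVert k = p.getVert k := fun k hk => by
    simp [c, Walk.getVert_append', hk]
  have hc_right : ∀ k, p.length ≤ k → c.getVert k = q.getVert (c.length - k) := fun k hk => by
    rcases hk.eq_or_lt with rfl | hk
    · simp [hc_left, hn]
    · simp [c, Walk.getVert_append', Walk.getVert_reverse, hk.not_ge]
      congr 1
      omega
  have hpair : ∀ i j, i < j → j < c.length → c.getVert i ≠ c.getVert j ∧
      (i + 1 < j → (0 < i ∨ j + 1 < c.length) → ¬ G.Adj (c.getVert i) (c.getVert j)) := by
    intro i j hij hj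
    rcases le_or_gt j p.length with hjp | hjp
    · rw [hc_left i (by omega), hc_left j hjp]
      exact ⟨fun h => by have := hp.1.getVert_injOn (by simp; omega) (by simpa) h; omega,
        fun hij' _ => hp.2 i j hij' hjp⟩
    rcases le_or_gt p.length i with hip | hip
    · rw [hc_right i hip, hc_right j hjp.le]
      exact ⟨fun h => by have := hq.1.getVert_injOn (by simp; omega) (by simp; omega) h; omega,
        fun hij' _ h => hq.2 (c.length - j) (c.length - i) (by omega) (by omega) h.symm⟩
    rw [hc_right j hjp.le]
    rcases Nat.eq_zero_or_pos i with rfl | hi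
    · rw [show c.getVert 0 = q.getVert 0 by simp]
      exact ⟨fun h => by have := hq.1.getVert_injOn (by simp) (by simp; omega) h; omega,
        fun _ hend => hq.2 0 (c.length - j) (by omega) (by omega)⟩
    · rw [hc_left i hip.le]
      exact ⟨(hcross i _ hi hip (by omega) (by omega)).1,
        fun _ _ => (hcross i _ hi hip (by omega) (by omega)).2⟩
  obtain ⟨i, j, hij, hj, hend, hadj⟩ := hG.exists_chord c (by omega) fun i hi j hj h => by
    by_contra hne
    rcases Nat.lt_or_gt_of_ne hne with hlt | hlt
    · exact (hpair i j hlt hj).1 h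
    · exact (hpair j i hlt hi).1 h.symm
  exact (hpair i j (by omega) hj).2 hij hend hadj

lemma Separates.ne_and_not_adj {u v a b : V} {S : Set V} (hS : Separates G u v S)
    (ha : G.ReachableAvoiding S u a) (hb : G.ReachableAvoiding S v b) :
    a ≠ b ∧ ¬ G.Adj a b := by
  rw [separates_iff_not_reachableAvoiding] at hS
  exact ⟨fun h => hS (ha.trans (h ▸ hb.symm)),
    fun h => hS ((ha.trans_adj h hb.right_notMem).trans hb.symm)⟩

namespace IsMinimalUVSeparator

variable {u v : V} {S : Set V}

lemma symm (hS : IsMinimalUVSeparator G u v S) : IsMinimalUVSeparator G v u S := by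
  obtain ⟨huv, hnadj, hu, hv, hsep, hmin⟩ := hS
  have hrev : ∀ {T : Set V}, Separates G u v T ↔ Separates G v u T := fun {T} => by
    simp only [separates_iff_not_reachableAvoiding]
    exact not_congr ⟨.symm, .symm⟩
  exact ⟨huv.symm, fun h => hnadj h.symm, hv, hu, hrev.mp hsep,
    fun T hT h => hmin T hT (hrev.mpr h)⟩

/-- A walk from `u` to `v` that avoids `S \ {z}` must enter `S` at `z`. -/
lemma exists_adj_reachableAvoiding (hS : IsMinimalUVSeparator G u v S) {z : V} (hz : z ∈ S) :
    ∃ c, G.Adj z c ∧ G.ReachableAvoiding S u c := by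
  obtain ⟨-, -, hu, -, hsep, hmin⟩ := hS
  have hsub : S \ {z} ⊂ S := Set.sdiff_singleton_ssubset.mpr hz
  obtain ⟨p, hp⟩ : ∃ p : G.Walk u v, ∀ w ∈ p.support, w ∉ S \ {z} := by
    simpa [Separates] using hmin _ hsub
  obtain ⟨c, d, hc, hcd, hd, hdp⟩ := p.exists_reachableAvoiding_adj_mem hu (hsep p)
  obtain rfl : d = z := by simpa [hd] using hp d hdp
  exact ⟨c, hcd.symm, hc⟩

lemma exists_isInducedPath (hS : IsMinimalUVSeparator G u v S) {x y : V} (hx : x ∈ S)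
    (hy : y ∈ S) : ∃ p : G.Walk x y, p.IsInducedPath ∧
      ∀ i, 0 < i → i < p.length → G.ReachableAvoiding S u (p.getVert i) := by
  obtain ⟨c, hxc, hc⟩ := hS.exists_adj_reachableAvoiding hx
  obtain ⟨c', hyc', hc'⟩ := hS.exists_adj_reachableAvoiding hy
  obtain ⟨r, hr⟩ := hc.symm.trans hc'
  obtain ⟨p, hp, hsub⟩ :=
    (Walk.cons hxc (r.concat hyc'.symm)).exists_isInducedPath_support_subset
  refine ⟨p, hp, fun i hi hil => ?_⟩
  have hw := hsub (p.getVert_mem_support i)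
  simp only [Walk.support_cons, Walk.support_concat, List.mem_cons, List.mem_append,
    List.not_mem_nil, or_false] at hw
  rcases hw with hw | hw | hw
  · exact absurd ((hp.1.getVert_eq_start_iff hil.le).mp hw) hi.ne'
  · exact hc.trans (.of_mem_support hr hw)
  · exact absurd ((hp.1.getVert_eq_end_iff hil.le).mp hw) hil.ne

end IsMinimalUVSeparator

lemma Chordal.isClique_of_isMinimalUVSeparator (hG : Chordal G) {u v : V} {S : Set V}
    (hS : IsMinimalUVSeparator G u v S) : G.IsClique S := by
  intro x hx y hy hxy
  have hsep : Separates G u v S := hS.2.2.2.2.1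
  obtain ⟨p, hp, hpu⟩ := hS.exists_isInducedPath hx hy
  obtain ⟨q, hq, hqv⟩ := hS.symm.exists_isInducedPath hx hy
  exact hG.adj_of_isInducedPath hp hq hxy fun i j hi hip hj hjq =>
    hsep.ne_and_not_adj (hpu i hi hip) (hqv j hj hjq)

/-- The neighbours of `y` that see the component of `G - N[y]` containing `z`. -/
def SimpleGraph.neighborSetToward (G : SimpleGraph V) (y z : V) : Set V :=
  {w | G.Adj y w ∧ ∃ c, G.ReachableAvoiding (insert y (G.neighborSet y)) z c ∧ G.Adj c w}

lemma SimpleGraph.isMinimalUVSeparator_neighborSetToward {y z : V} (hzy : z ≠ y)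
    (hnadj : ¬ G.Adj z y) :
    IsMinimalUVSeparator G z y (G.neighborSetToward y z) := by
  set A := insert y (G.neighborSet y)
  have hzA : z ∉ A := by simpa [A, hzy] using fun h => hnadj h.symm
  have hTA : G.neighborSetToward y z ⊆ A := fun w hw => Or.inr hw.1
  have hyT : y ∉ G.neighborSetToward y z := fun h => G.irrefl h.1
  refine ⟨hzy, hnadj, fun h => hzA (hTA h), hyT, fun p => ?_, fun T hT hsep => ?_⟩
  · obtain ⟨c, d, hc, hcd, hdA, hdp⟩ :=
      p.exists_reachableAvoiding_adj_mem hzA ⟨y, p.end_mem_support, Set.mem_insert y _⟩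
    rcases hdA with rfl | hd
    · exact absurd (Or.inr hcd.symm) hc.right_notMem
    · exact ⟨d, hdp, hd, c, hc, hcd⟩
  · obtain ⟨w, ⟨hyw, c, hc, hcw⟩, hwT⟩ := Set.exists_of_ssubset hT
    rw [separates_iff_not_reachableAvoiding] at hsep
    exact hsep (((hc.mono (hT.subset.trans hTA)).trans_adj hcw hwT).trans_adj hyw.symm
      fun h => hyT (hT.subset h))

lemma StrictlyChordal.insert_neighborSet_subset (hsc : StrictlyChordal G) {S : Set V}
    (hS : IsMinimalVertexSeparator G S) {a b : V} (ha : a ∈ S) (hb : b ∈ S) :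
    insert a (G.neighborSet a) ⊆ insert b (G.neighborSet b) := by
  rcases eq_or_ne a b with rfl | hab
  · rfl
  obtain ⟨u, v, hUV⟩ := hS
  have hadj : G.Adj a b := Chordal.isClique_of_isMinimalUVSeparator hsc.1 hUV ha hb hab
  rintro z (rfl | hz)
  · exact Or.inr hadj.symm
  by_contra hzb
  have hzb' : z ≠ b ∧ ¬ G.Adj b z := by simpa using hzb
  have hT := isMinimalUVSeparator_neighborSetToward hzb'.1 fun h => hzb'.2 h.symm
  have haT : a ∈ G.neighborSetToward b z := ⟨hadj.symm, z, .refl hzb, G.adj_symm hz⟩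
  have hbT : b ∉ G.neighborSetToward b z := hT.2.2.2.1
  have hST : S ≠ G.neighborSetToward b z := fun h => hbT (h ▸ hb)
  exact Set.disjoint_left.mp (hsc.2 S _ ⟨u, v, hUV⟩ ⟨z, b, hT⟩ hST) ha haT

end

/-- In a strictly chordal graph, any two vertices of a minimal vertex separator are true
twins. -/
theorem stmt_10 {V : Type*} (G : SimpleGraph V) (hsc : StrictlyChordal G) (S : Set V)
    (hS : IsMinimalVertexSeparator G S) :
    ∀ x ∈ S, ∀ y ∈ S, insert x (G.neighborSet x) = insert y (G.neighborSet y) :=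
  fun _ hx _ hy => (hsc.insert_neighborSet_subset hS hx hy).antisymm
    (hsc.insert_neighborSet_subset hS hy hx)
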